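/- Let C ⊆ ℍⁿ_κ be a closed κ-hyperbolically convex set and q ∈ ℍⁿ_κ. Then for every p ∈ C, d(p, P_C(q))² ≤ ⟨log_p q, log_p P_C(q)⟩ + ⟨log_{P_C(q)} p, log_{P_C(q)} q⟩, and consequently d(p, P_C(q))² ≤ ⟨log_p q, log_p P_C(q)⟩. In particular, d(p, P_C(q)) ≤ d(p, q) for all p ∈ C. -/

import Mathlib

noncomputable section

/-- Lorentzian inner product on ℝ^{n+1}. -/
def lip {n : ℕ} (x y : Fin (n+1) → ℝ) : ℝ :=
  (∑ i : Fin n, x i.castSucc * y i.castSucc) - x (Fin.last n) * y (Fin.last n)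

/-- Lorentzian norm (of vectors with nonnegative self-product). -/
def lnorm {n : ℕ} (x : Fin (n+1) → ℝ) : ℝ := Real.sqrt (lip x x)

/-- Euclidean dot product. -/
def edot {n : ℕ} (x y : Fin (n+1) → ℝ) : ℝ := ∑ i, x i * y i

/-- The matrix J = diag(1,…,1,−1) as a map. -/
def Jm {n : ℕ} (x : Fin (n+1) → ℝ) : Fin (n+1) → ℝ :=
  fun i => if i = Fin.last n then -(x i) else x i

/-- The κ-hyperbolic space form (hyperboloid model). -/
def Hyp {n : ℕ} (κ : ℝ) : Set (Fin (n+1) → ℝ) :=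
  {p | lip p p = -1/κ ∧ 0 < p (Fin.last n)}

/-- Inverse hyperbolic cosine. -/
def arcosh (x : ℝ) : ℝ := Real.log (x + Real.sqrt (x^2 - 1))

/-- Intrinsic distance on the κ-hyperbolic space form. -/
def dH {n : ℕ} (κ : ℝ) (p q : Fin (n+1) → ℝ) : ℝ :=
  (1 / Real.sqrt κ) * arcosh (-(κ * lip p q))

/-- Lorentzian projection onto the tangent space at p. -/
def projT {n : ℕ} (κ : ℝ) (p x : Fin (n+1) → ℝ) : Fin (n+1) → ℝ :=
  x + (κ * lip p x) • p

/-- Logarithm map of the κ-hyperbolic space form. -/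
def logH {n : ℕ} (κ : ℝ) (p q : Fin (n+1) → ℝ) : Fin (n+1) → ℝ :=
  (dH κ p q / lnorm (projT κ p q)) • projT κ p q

/-- Exponential map of the κ-hyperbolic space form. -/
def expH {n : ℕ} (κ : ℝ) (p v : Fin (n+1) → ℝ) : Fin (n+1) → ℝ :=
  Real.cosh (Real.sqrt κ * lnorm v) • p +
    (Real.sinh (Real.sqrt κ * lnorm v) / (Real.sqrt κ * lnorm v)) • v

/-- The cone spanned by a set. -/
def coneOf {n : ℕ} (C : Set (Fin (n+1) → ℝ)) : Set (Fin (n+1) → ℝ) :=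
  {x | ∃ t : ℝ, 0 ≤ t ∧ ∃ p ∈ C, x = t • p}

/-- The Lorentz cone. -/
def LorentzCone {n : ℕ} : Set (Fin (n+1) → ℝ) :=
  {x | lip x x ≤ 0 ∧ 0 ≤ x (Fin.last n)}

/-- The interior of the Lorentz cone. -/
def LorentzConeInt {n : ℕ} : Set (Fin (n+1) → ℝ) :=
  {x | lip x x < 0 ∧ 0 < x (Fin.last n)}

/-!
Write `d = dH κ` and `⟨·,·⟩ = lip`. The hyperbolic law of cosines together with the convexity
of `t ↦ cosh √t` on `[0, ∞)` gives, for all `x y z` on the hyperboloid, the comparison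
`d(x,y)² + d(x,z)² ≤ d(y,z)² + 2 ⟨log_x y, log_x z⟩`. Applied at the vertices `p` and `P_C(q)`
of the triangle `p q P_C(q)` and added, it yields the first inequality; the variational
inequality at `P_C(q)` yields the second, and the Cauchy–Schwarz inequality
`⟨log_p q, log_p P_C(q)⟩ ≤ d(p,q) d(p,P_C(q))` in the tangent space at `p` the third.
-/

namespace Real

lemma sinh_le_mul_cosh {r : ℝ} (hr : 0 ≤ r) : sinh r ≤ r * cosh r := by
  have hmono : MonotoneOn (fun r => r * cosh r - sinh r) (Set.Ici 0) := by
    refine monotoneOn_of_hasDerivWithinAt_nonneg (f' := fun r => r * sinh r) (convex_Ici 0)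
      (by fun_prop) (fun x _ => ?_) (fun x hx => ?_)
    · exact ((((hasDerivAt_id x).mul (hasDerivAt_cosh x)).sub
        (hasDerivAt_sinh x)).congr_deriv (by simp)).hasDerivWithinAt
    · rw [interior_Ici] at hx
      exact mul_nonneg hx.le (sinh_nonneg_iff.2 hx.le)
  simpa using hmono Set.self_mem_Ici hr hr

lemma monotoneOn_sinh_div_self : MonotoneOn (fun r => sinh r / r) (Set.Ioi 0) := by
  refine monotoneOn_of_hasDerivWithinAt_nonneg (convex_Ioi 0)
    (f' := fun r => (cosh r * r - sinh r * 1) / r ^ 2)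
    (continuous_sinh.continuousOn.div continuousOn_id fun x hx => hx.ne') (fun x hx => ?_)
    (fun x hx => ?_) <;> rw [interior_Ioi] at hx
  · exact ((hasDerivAt_sinh x).div (hasDerivAt_id x) hx.ne').hasDerivWithinAt
  · exact div_nonneg (by linarith [sinh_le_mul_cosh hx.le]) (sq_nonneg x)

lemma convexOn_cosh_sqrt : ConvexOn ℝ (Set.Ici 0) (fun t => cosh √t) := by
  have hderiv (t : ℝ) (ht : t ∈ Set.Ioi 0) :
      HasDerivAt (fun t => cosh √t) (sinh √t / √t / 2) t :=
    ((hasDerivAt_cosh √t).comp t (hasDerivAt_sqrt (ne_of_gt ht))).congr_deriv (by field_simp)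
  refine MonotoneOn.convexOn_of_deriv (convex_Ici 0) (by fun_prop) ?_ ?_ <;> rw [interior_Ici]
  · exact fun t ht => (hderiv t ht).differentiableAt.differentiableWithinAt
  · intro s hs t ht hst
    rw [(hderiv s hs).deriv, (hderiv t ht).deriv]
    gcongr ?_ / 2
    exact monotoneOn_sinh_div_self (sqrt_pos.2 hs) (sqrt_pos.2 ht) (sqrt_le_sqrt hst)

/-- Jensen's inequality for `t ↦ cosh √t` between `(α - β)²` and `(α + β)²`. -/
lemma cosh_sqrt_le {α β u : ℝ} (hu : |u| ≤ 1) :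
    cosh √(α ^ 2 + β ^ 2 - 2 * α * β * u) ≤ cosh α * cosh β - sinh α * sinh β * u := by
  obtain ⟨hu₁, hu₂⟩ := abs_le.1 hu
  have h := convexOn_cosh_sqrt.2 (Set.mem_Ici.2 (sq_nonneg (α - β)))
    (Set.mem_Ici.2 (sq_nonneg (α + β))) (by linarith : 0 ≤ (1 + u) / 2)
    (by linarith : 0 ≤ (1 - u) / 2) (by ring)
  simp only [smul_eq_mul, sqrt_sq_eq_abs, cosh_abs] at h
  calc cosh √(α ^ 2 + β ^ 2 - 2 * α * β * u)
      = cosh √((1 + u) / 2 * (α - β) ^ 2 + (1 - u) / 2 * (α + β) ^ 2) := by ring_nf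
    _ ≤ (1 + u) / 2 * cosh (α - β) + (1 - u) / 2 * cosh (α + β) := h
    _ = cosh α * cosh β - sinh α * sinh β * u := by rw [cosh_sub, cosh_add]; ring

lemma sq_add_sq_sub_le_sq_of_cosh_eq {α β γ u : ℝ} (hγ : 0 ≤ γ)
    (hu : |u| ≤ 1) (h : cosh γ = cosh α * cosh β - sinh α * sinh β * u) :
    α ^ 2 + β ^ 2 - 2 * α * β * u ≤ γ ^ 2 := by
  have hcosh := (cosh_sqrt_le hu).trans h.ge
  rw [cosh_le_cosh, abs_of_nonneg (sqrt_nonneg _), abs_of_nonneg hγ] at hcosh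
  exact (sqrt_le_left hγ).1 hcosh

end Real

section Lorentz

variable {n : ℕ}

lemma lip_comm (x y : Fin (n+1) → ℝ) : lip x y = lip y x := by
  simp only [lip, mul_comm]

lemma lip_add_left (x y z : Fin (n+1) → ℝ) : lip (x + y) z = lip x z + lip y z := by
  simp only [lip, Pi.add_apply, add_mul, Finset.sum_add_distrib]; ring

lemma lip_smul_left (s : ℝ) (x y : Fin (n+1) → ℝ) : lip (s • x) y = s * lip x y := by
  simp only [lip, Pi.smul_apply, smul_eq_mul, mul_assoc, ← Finset.mul_sum]; ring

lemma lip_add_right (x y z : Fin (n+1) → ℝ) : lip x (y + z) = lip x y + lip x z := by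
  rw [lip_comm, lip_add_left, lip_comm y, lip_comm z]

lemma lip_smul_right (s : ℝ) (x y : Fin (n+1) → ℝ) : lip x (s • y) = s * lip x y := by
  rw [lip_comm, lip_smul_left, lip_comm]

lemma lip_self_nonneg_of_lip_eq_zero {p x : Fin (n+1) → ℝ} (hp : lip p p < 0)
    (hx : lip p x = 0) : 0 ≤ lip x x := by
  have hcs := Finset.sum_mul_sq_le_sq_mul_sq Finset.univ
    (fun i : Fin n => p i.castSucc) (fun i : Fin n => x i.castSucc)
  simp only [lip, ← sq] at hp hx hcs ⊢
  set P := ∑ i : Fin n, p i.castSucc ^ 2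
  set X := ∑ i : Fin n, x i.castSucc ^ 2
  have hP : 0 ≤ P := Finset.sum_nonneg fun i _ => sq_nonneg _
  have hX : 0 ≤ X := Finset.sum_nonneg fun i _ => sq_nonneg _
  rw [sub_eq_zero.1 hx] at hcs
  have hlast : p (Fin.last n) ^ 2 * x (Fin.last n) ^ 2 ≤ p (Fin.last n) ^ 2 * X := by nlinarith
  linarith [le_of_mul_le_mul_left hlast (by linarith)]

lemma sq_lip_le_of_lip_eq_zero {p u v : Fin (n+1) → ℝ} (hp : lip p p < 0)
    (hu : lip p u = 0) (hv : lip p v = 0) : lip u v ^ 2 ≤ lip u u * lip v v := by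
  have hquad (t : ℝ) : 0 ≤ lip v v * (t * t) + 2 * lip u v * t + lip u u := by
    have h := lip_self_nonneg_of_lip_eq_zero hp
      (by rw [lip_add_right, lip_smul_right, hu, hv, mul_zero, add_zero] : lip p (u + t • v) = 0)
    simp only [lip_add_left, lip_add_right, lip_smul_left, lip_smul_right, lip_comm v u] at h
    linarith
  have := discrim_le_zero hquad
  rw [discrim] at this
  linarith

lemma abs_lip_le_lnorm_mul_lnorm {p u v : Fin (n+1) → ℝ} (hp : lip p p < 0)
    (hu : lip p u = 0) (hv : lip p v = 0) : |lip u v| ≤ lnorm u * lnorm v := by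
  rw [lnorm, lnorm, ← Real.sqrt_mul (lip_self_nonneg_of_lip_eq_zero hp hu)]
  exact Real.abs_le_sqrt (sq_lip_le_of_lip_eq_zero hp hu hv)

lemma lnorm_nonneg (x : Fin (n+1) → ℝ) : 0 ≤ lnorm x := Real.sqrt_nonneg _

/-- Cosine of the angle between two spacelike vectors; `0` if one of them is null. -/
def lcos (u v : Fin (n+1) → ℝ) : ℝ := lip u v / (lnorm u * lnorm v)

lemma abs_lcos_le_one {p u v : Fin (n+1) → ℝ} (hp : lip p p < 0)
    (hu : lip p u = 0) (hv : lip p v = 0) : |lcos u v| ≤ 1 := by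
  have hnn := mul_nonneg (lnorm_nonneg u) (lnorm_nonneg v)
  rw [lcos, abs_div, abs_of_nonneg hnn]
  exact div_le_one_of_le₀ (abs_lip_le_lnorm_mul_lnorm hp hu hv) hnn

lemma lnorm_mul_lnorm_mul_lcos {p u v : Fin (n+1) → ℝ} (hp : lip p p < 0)
    (hu : lip p u = 0) (hv : lip p v = 0) : lnorm u * lnorm v * lcos u v = lip u v := by
  by_cases h : lnorm u * lnorm v = 0
  · rw [h, zero_mul, eq_comm, ← abs_nonpos_iff, ← h]
    exact abs_lip_le_lnorm_mul_lnorm hp hu hv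
  · exact mul_div_cancel₀ _ h

end Lorentz

section Hyperboloid

open Real

variable {n : ℕ} {κ : ℝ} {p q x y z : Fin (n+1) → ℝ}

lemma lip_self_neg_of_mem_Hyp (hκ : 0 < κ) (hp : p ∈ Hyp κ) : lip p p < 0 := by
  rw [hp.1]
  exact div_neg_of_neg_of_pos (by norm_num) hκ

lemma lip_neg_of_mem_Hyp (hκ : 0 < κ) (hp : p ∈ Hyp κ) (hq : q ∈ Hyp κ) : lip p q < 0 := by
  have hpp := lip_self_neg_of_mem_Hyp hκ hp
  have hqq := lip_self_neg_of_mem_Hyp hκ hq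
  have hcs := Finset.sum_mul_sq_le_sq_mul_sq Finset.univ
    (fun i : Fin n => p i.castSucc) (fun i : Fin n => q i.castSucc)
  simp only [lip, ← sq] at hpp hqq hcs ⊢
  have hP : 0 ≤ ∑ i : Fin n, p i.castSucc ^ 2 := Finset.sum_nonneg fun i _ => sq_nonneg _
  have hqL : 0 < q (Fin.last n) ^ 2 := pow_pos hq.2 2
  have hsq : (∑ i : Fin n, p i.castSucc * q i.castSucc) ^ 2
      < (p (Fin.last n) * q (Fin.last n)) ^ 2 :=
    calc _ ≤ (∑ i : Fin n, p i.castSucc ^ 2) * q (Fin.last n) ^ 2 :=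
          hcs.trans (mul_le_mul_of_nonneg_left (by linarith) hP)
      _ < p (Fin.last n) ^ 2 * q (Fin.last n) ^ 2 := mul_lt_mul_of_pos_right (by linarith) hqL
      _ = _ := (mul_pow _ _ _).symm
  have := abs_lt_of_sq_lt_sq' hsq (mul_pos hp.2 hq.2).le
  linarith

lemma lip_projT_right (hκ : κ ≠ 0) (hp : lip p p = -1/κ) (x : Fin (n+1) → ℝ) :
    lip p (projT κ p x) = 0 := by
  rw [projT, lip_add_right, lip_smul_right, hp]
  field_simp
  ring

lemma lip_projT_projT (hκ : κ ≠ 0) (hp : lip p p = -1/κ) (x y : Fin (n+1) → ℝ) :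
    lip (projT κ p x) (projT κ p y) = lip x y + κ * lip p x * lip p y := by
  simp only [projT, lip_add_left, lip_add_right, lip_smul_left, lip_smul_right, hp, lip_comm x p]
  field_simp
  ring

/-- The reverse Cauchy–Schwarz inequality on the hyperboloid. -/
lemma one_le_neg_mul_lip (hκ : 0 < κ) (hp : p ∈ Hyp κ) (hq : q ∈ Hyp κ) :
    1 ≤ -(κ * lip p q) := by
  have h := lip_self_nonneg_of_lip_eq_zero (lip_self_neg_of_mem_Hyp hκ hp)
    (lip_projT_right hκ.ne' hp.1 q)
  rw [lip_projT_projT hκ.ne' hp.1, hq.1] at h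
  have hsq : 1 ≤ (κ * lip p q) ^ 2 := by
    have := mul_le_mul_of_nonneg_left h hκ.le
    field_simp at this
    linarith
  have hpos : 0 < -(κ * lip p q) :=
    neg_pos.2 (mul_neg_of_pos_of_neg hκ (lip_neg_of_mem_Hyp hκ hp hq))
  nlinarith

lemma sqrt_mul_dH (hκ : 0 < κ) (p q : Fin (n+1) → ℝ) :
    √κ * dH κ p q = Real.arcosh (-(κ * lip p q)) := by
  rw [dH, ← mul_assoc, mul_one_div_cancel (sqrt_pos.2 hκ).ne', one_mul]
  rfl

lemma dH_nonneg (hκ : 0 < κ) (hp : p ∈ Hyp κ) (hq : q ∈ Hyp κ) : 0 ≤ dH κ p q :=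
  mul_nonneg (by positivity) (arcosh_nonneg (one_le_neg_mul_lip hκ hp hq))

lemma dH_comm (κ : ℝ) (p q : Fin (n+1) → ℝ) : dH κ p q = dH κ q p := by
  rw [dH, dH, lip_comm]

lemma cosh_sqrt_mul_dH (hκ : 0 < κ) (hp : p ∈ Hyp κ) (hq : q ∈ Hyp κ) :
    cosh (√κ * dH κ p q) = -(κ * lip p q) := by
  rw [sqrt_mul_dH hκ, cosh_arcosh (one_le_neg_mul_lip hκ hp hq)]

lemma sinh_sqrt_mul_dH (hκ : 0 < κ) (hp : p ∈ Hyp κ) (hq : q ∈ Hyp κ) :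
    sinh (√κ * dH κ p q) = √κ * lnorm (projT κ p q) := by
  rw [sqrt_mul_dH hκ, sinh_arcosh (one_le_neg_mul_lip hκ hp hq), lnorm,
    lip_projT_projT hκ.ne' hp.1, hq.1, ← sqrt_mul hκ.le]
  congr 1
  field_simp
  ring

lemma lip_logH_logH (κ : ℝ) (p x y : Fin (n+1) → ℝ) :
    lip (logH κ p x) (logH κ p y) =
      dH κ p x * dH κ p y * lcos (projT κ p x) (projT κ p y) := by
  simp only [logH, lcos, lip_smul_left, lip_smul_right]
  ring

lemma abs_lcos_projT_le_one (hκ : 0 < κ) (hx : x ∈ Hyp κ) (y z : Fin (n+1) → ℝ) :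
    |lcos (projT κ x y) (projT κ x z)| ≤ 1 :=
  abs_lcos_le_one (lip_self_neg_of_mem_Hyp hκ hx) (lip_projT_right hκ.ne' hx.1 y)
    (lip_projT_right hκ.ne' hx.1 z)

lemma law_cos_dH (hκ : 0 < κ) (hx : x ∈ Hyp κ) (hy : y ∈ Hyp κ) (hz : z ∈ Hyp κ) :
    cosh (√κ * dH κ y z) = cosh (√κ * dH κ x y) * cosh (√κ * dH κ x z) -
      sinh (√κ * dH κ x y) * sinh (√κ * dH κ x z) * lcos (projT κ x y) (projT κ x z) := by
  have hcos := lnorm_mul_lnorm_mul_lcos (lip_self_neg_of_mem_Hyp hκ hx)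
    (lip_projT_right hκ.ne' hx.1 y) (lip_projT_right hκ.ne' hx.1 z)
  rw [lip_projT_projT hκ.ne' hx.1] at hcos
  rw [cosh_sqrt_mul_dH hκ hy hz, cosh_sqrt_mul_dH hκ hx hy, cosh_sqrt_mul_dH hκ hx hz,
    sinh_sqrt_mul_dH hκ hx hy, sinh_sqrt_mul_dH hκ hx hz]
  linear_combination κ * hcos + (lnorm (projT κ x y) * lnorm (projT κ x z) *
    lcos (projT κ x y) (projT κ x z)) * mul_self_sqrt hκ.le

/-- The left side minus twice the inner product is `‖log_x y - log_x z‖²`: `log_x` does not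
increase distances. -/
lemma dH_sq_add_dH_sq_le (hκ : 0 < κ) (hx : x ∈ Hyp κ) (hy : y ∈ Hyp κ) (hz : z ∈ Hyp κ) :
    dH κ x y ^ 2 + dH κ x z ^ 2 ≤ dH κ y z ^ 2 + 2 * lip (logH κ x y) (logH κ x z) := by
  have h := sq_add_sq_sub_le_sq_of_cosh_eq
    (mul_nonneg (sqrt_nonneg κ) (dH_nonneg hκ hy hz)) (abs_lcos_projT_le_one hκ hx y z)
    (law_cos_dH hκ hx hy hz)
  rw [mul_pow, mul_pow, mul_pow, sq_sqrt hκ.le] at h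
  rw [lip_logH_logH]
  refine le_of_mul_le_mul_left ?_ hκ
  linear_combination h + (2 * dH κ x y * dH κ x z * lcos (projT κ x y) (projT κ x z)) *
    mul_self_sqrt hκ.le

lemma lip_logH_le_dH_mul_dH (hκ : 0 < κ) (hx : x ∈ Hyp κ) (hy : y ∈ Hyp κ) (hz : z ∈ Hyp κ) :
    lip (logH κ x y) (logH κ x z) ≤ dH κ x y * dH κ x z := by
  rw [lip_logH_logH]
  exact mul_le_of_le_one_right (mul_nonneg (dH_nonneg hκ hx hy) (dH_nonneg hκ hx hz))
    (abs_le.1 (abs_lcos_projT_le_one hκ hx y z)).2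

end Hyperboloid

theorem intrinsic_projection_inequalities_general {n : ℕ} (κ : ℝ) (hκ : 0 < κ)
    (C : Set (Fin (n+1) → ℝ)) (hC : C ⊆ Hyp κ) (q : Fin (n+1) → ℝ) (hq : q ∈ Hyp κ)
    (Pq : Fin (n+1) → ℝ) (hPmem : Pq ∈ C)
    (hPvar : ∀ y ∈ C, lip (logH κ Pq q) (logH κ Pq y) ≤ 0) :
    ∀ p ∈ C,
      (dH κ p Pq ^ 2 ≤ lip (logH κ p q) (logH κ p Pq) + lip (logH κ Pq p) (logH κ Pq q)) ∧
      (dH κ p Pq ^ 2 ≤ lip (logH κ p q) (logH κ p Pq)) ∧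
      dH κ p Pq ≤ dH κ p q := by
  intro p hp
  have hpH := hC hp
  have hPH := hC hPmem
  have h_at_p := dH_sq_add_dH_sq_le hκ hpH hq hPH
  have h_at_Pq := dH_sq_add_dH_sq_le hκ hPH hpH hq
  rw [dH_comm κ Pq p, dH_comm κ Pq q] at h_at_Pq
  have h_var : lip (logH κ Pq p) (logH κ Pq q) ≤ 0 := lip_comm _ _ ▸ hPvar p hp
  have h_sum : dH κ p Pq ^ 2 ≤
      lip (logH κ p q) (logH κ p Pq) + lip (logH κ Pq p) (logH κ Pq q) := by
    linarith
  have h_first : dH κ p Pq ^ 2 ≤ lip (logH κ p q) (logH κ p Pq) := by linarith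
  refine ⟨h_sum, h_first, ?_⟩
  have h_cs := lip_logH_le_dH_mul_dH hκ hpH hq hPH
  nlinarith [dH_nonneg hκ hpH hq, dH_nonneg hκ hpH hPH]

/-- Properties of the intrinsic κ-projection onto a closed κ-hyperbolically convex set:
for every p ∈ C, d(p,P_C(q))² ≤ ⟨log_p q, log_p P_C(q)⟩ + ⟨log_{P_C(q)} p, log_{P_C(q)} q⟩,
hence d(p,P_C(q))² ≤ ⟨log_p q, log_p P_C(q)⟩, and d(p,P_C(q)) ≤ d(p,q). -/
theorem intrinsic_projection_inequalities {n : ℕ} (κ : ℝ) (hκ : 0 < κ)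
    (C : Set (Fin (n+1) → ℝ)) (hC : C ⊆ Hyp κ) (hCc : IsClosed C)
    (hconv : Convex ℝ (coneOf C)) (q : Fin (n+1) → ℝ) (hq : q ∈ Hyp κ)
    (Pq : Fin (n+1) → ℝ) (hPmem : Pq ∈ C)
    (hPmin : ∀ y ∈ C, dH κ q Pq ≤ dH κ q y)
    (hPvar : ∀ y ∈ C, lip (logH κ Pq q) (logH κ Pq y) ≤ 0) :
    ∀ p ∈ C,
      (dH κ p Pq ^ 2 ≤ lip (logH κ p q) (logH κ p Pq) + lip (logH κ Pq p) (logH κ Pq q)) ∧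
      (dH κ p Pq ^ 2 ≤ lip (logH κ p q) (logH κ p Pq)) ∧
      dH κ p Pq ≤ dH κ p q :=
  intrinsic_projection_inequalities_general κ hκ C hC q hq Pq hPmem hPvar
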